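/- The ordinary generating function Ω(q,s,z) = ∑_{N≥0} G_N(q,s) z^N of the q-s Catalan numbers satisfies the functional equation Ω(q,s,z) − 1 = s·z·Ω(q,s,z)·Ω(q,1,qz), as an identity of formal power series in z. -/

import Mathlib

/-!
A nonempty Dyck path factors uniquely at its first return to the axis as `U w₁ D w₂` with `w₁`,
`w₂` Dyck paths. Its returns are that first return plus the returns of `w₂`, and its area is
`area w₁ + area w₂ + |w₁|/2`, because the arch `U w₁ D` lifts `w₁` by one unit. Summing over the
factorizations gives `G_{N+1}(q,s) = s ∑_{i+j=N} G_i(q,s) G_j(q,1) q^j`, which is the coefficient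
of `z^{N+1}` in the functional equation.
-/

open Finset

/-- Height of a ±1 path after `k` steps (`true` = up-step, `false` = down-step). -/
def dheight (w : List Bool) (k : ℕ) : ℤ :=
  ((w.take k).map (fun b => if b then (1 : ℤ) else -1)).sum

/-- A Dyck path: heights stay nonnegative and the path ends at height 0. -/
def IsDyck (w : List Bool) : Prop :=
  (∀ k ∈ Finset.range (w.length + 1), 0 ≤ dheight w k) ∧ dheight w w.length = 0

/-- The area (number of full lattice squares) under a Dyck path:
`a(w) = (∑_{k=1}^{2N} h_k - N) / 2`. -/
def darea (w : List Bool) : ℤ :=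
  ((∑ k ∈ Finset.range w.length, dheight w (k + 1)) - (w.length : ℤ) / 2) / 2

/-- Number of returns of the path to height zero (endpoint counted, start not). -/
def dreturns (w : List Bool) : ℕ :=
  ((Finset.Icc 1 w.length).filter (fun k => dheight w k = 0)).card

-- The q-s Catalan number `G_N(q,s) = ∑_{w ∈ D_N} q^{a(w)} s^{m(w)}`.
open scoped Classical in
noncomputable def Gqs (N : ℕ) (q s : ℝ) : ℝ :=
  ∑ f : Fin (2 * N) → Bool,
    if IsDyck (List.ofFn f)
    then q ^ (darea (List.ofFn f)).toNat * s ^ dreturns (List.ofFn f)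
    else 0

lemma dheight_zero (w : List Bool) : dheight w 0 = 0 := rfl

lemma dheight_succ (w : List Bool) {k : ℕ} (hk : k < w.length) :
    dheight w (k + 1) = dheight w k + if w[k] then 1 else -1 := by
  rw [dheight, List.take_add_one, List.getElem?_eq_getElem hk, Option.toList_some,
    List.map_append, List.sum_append, dheight]
  simp

lemma dheight_cons (b : Bool) (w : List Bool) (k : ℕ) :
    dheight (b :: w) (k + 1) = (if b then 1 else -1) + dheight w k := by
  simp [dheight]

lemma dheight_take (w : List Bool) {m k : ℕ} (h : k ≤ m) :
    dheight (w.take m) k = dheight w k := by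
  rw [dheight, List.take_take, min_eq_left h, dheight]

lemma dheight_append_of_le (a b : List Bool) {k : ℕ} (h : k ≤ a.length) :
    dheight (a ++ b) k = dheight a k := by
  rw [dheight, List.take_append_of_le_length h, dheight]

lemma dheight_append_add (a b : List Bool) (k : ℕ) :
    dheight (a ++ b) (a.length + k) = dheight a a.length + dheight b k := by
  rw [dheight, List.take_append, List.take_of_length_le (by omega), Nat.add_sub_cancel_left,
    List.map_append, List.sum_append, dheight, List.take_length, dheight]

def elevate (w : List Bool) : List Bool := true :: (w ++ [false])

@[simp]
lemma length_elevate (w : List Bool) : (elevate w).length = w.length + 2 := by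
  simp [elevate]

lemma dheight_elevate_succ (w : List Bool) {k : ℕ} (hk : k ≤ w.length) :
    dheight (elevate w) (k + 1) = dheight w k + 1 := by
  rw [elevate, dheight_cons, dheight_append_of_le _ _ hk, if_pos rfl, add_comm]

lemma dheight_elevate_length (w : List Bool) :
    dheight (elevate w) (w.length + 2) = dheight w w.length := by
  rw [elevate, dheight_cons, dheight_append_add, if_pos rfl]
  simp [dheight]

lemma IsDyck.nonneg {w : List Bool} (hw : IsDyck w) {k : ℕ} (hk : k ≤ w.length) :
    0 ≤ dheight w k :=
  hw.1 k (Finset.mem_range.2 (Nat.lt_succ_of_le hk))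

lemma IsDyck.of_forall {w : List Bool} (h : ∀ k ≤ w.length, 0 ≤ dheight w k)
    (hend : dheight w w.length = 0) : IsDyck w :=
  ⟨fun k hk => h k (Nat.le_of_lt_succ (Finset.mem_range.1 hk)), hend⟩

lemma isDyck_nil : IsDyck [] :=
  IsDyck.of_forall (fun _ _ => by simp [dheight]) rfl

lemma IsDyck.append {a b : List Bool} (ha : IsDyck a) (hb : IsDyck b) : IsDyck (a ++ b) := by
  refine IsDyck.of_forall (fun k hk => ?_) ?_
  · rcases le_or_gt k a.length with hka | hka
    · rw [dheight_append_of_le _ _ hka]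
      exact ha.nonneg hka
    · obtain ⟨j, rfl⟩ := Nat.exists_eq_add_of_le hka.le
      rw [dheight_append_add, ha.2, zero_add]
      exact hb.nonneg (by simp at hk; omega)
  · rw [List.length_append, dheight_append_add, ha.2, hb.2, add_zero]

lemma IsDyck.of_append_right {a b : List Bool} (h : IsDyck (a ++ b))
    (ha : dheight a a.length = 0) : IsDyck b := by
  have hb : ∀ k, dheight b k = dheight (a ++ b) (a.length + k) := fun k => by
    rw [dheight_append_add, ha, zero_add]
  refine IsDyck.of_forall (fun k hk => ?_) ?_
  · rw [hb]
    exact h.nonneg (by simp; omega)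
  · rw [hb, ← List.length_append]
    exact h.2

lemma isDyck_elevate {w : List Bool} (hw : IsDyck w) : IsDyck (elevate w) := by
  refine IsDyck.of_forall (fun k hk => ?_) ?_
  · rcases k with _ | k
    · exact le_rfl
    · rcases le_or_gt k w.length with hkw | hkw
      · rw [dheight_elevate_succ w hkw]
        linarith [hw.nonneg hkw]
      · rw [show k + 1 = w.length + 2 by simp at hk; omega, dheight_elevate_length, hw.2]
  · rw [length_elevate, dheight_elevate_length, hw.2]

lemma dheight_elevate_append_pos {w₁ : List Bool} (h₁ : IsDyck w₁) (w₂ : List Bool) {k : ℕ}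
    (hk : k ≤ w₁.length) : 0 < dheight (elevate w₁ ++ w₂) (k + 1) := by
  rw [dheight_append_of_le _ _ (by simp; omega), dheight_elevate_succ _ hk]
  linarith [h₁.nonneg hk]

lemma dheight_elevate_append_length {w₁ : List Bool} (h₁ : IsDyck w₁) (w₂ : List Bool) :
    dheight (elevate w₁ ++ w₂) (w₁.length + 2) = 0 := by
  rw [dheight_append_of_le _ _ (by simp), dheight_elevate_length, h₁.2]

lemma length_le_of_elevate_append_eq {w₁ w₂ v₁ v₂ : List Bool} (h₁ : IsDyck w₁)
    (h₁' : IsDyck v₁) (h : elevate w₁ ++ w₂ = elevate v₁ ++ v₂) : w₁.length ≤ v₁.length := by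
  by_contra! hlt
  have := dheight_elevate_append_pos h₁ w₂ (k := v₁.length + 1) hlt
  rw [h, dheight_elevate_append_length h₁'] at this
  exact this.false

lemma elevate_append_inj {w₁ w₂ v₁ v₂ : List Bool} (h₁ : IsDyck w₁) (h₁' : IsDyck v₁)
    (h : elevate w₁ ++ w₂ = elevate v₁ ++ v₂) : w₁ = v₁ ∧ w₂ = v₂ := by
  have hlen : w₁.length = v₁.length :=
    (length_le_of_elevate_append_eq h₁ h₁' h).antisymm
      (length_le_of_elevate_append_eq h₁' h₁ h.symm)
  obtain ⟨he, rfl⟩ := List.append_inj h (by simp [hlen])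
  simpa [elevate] using he

lemma exists_isDyck_take_of_dheight_length_eq_neg_one {v : List Bool}
    (hge : ∀ k ≤ v.length, -1 ≤ dheight v k) (hend : dheight v v.length = -1) :
    ∃ k, ∃ hk : k < v.length, v[k] = false ∧ IsDyck (v.take k) := by
  classical
  have hpos : 0 < v.length := by
    rcases v with _ | _
    · simp [dheight] at hend
    · simp
  have hex : ∃ k, k < v.length ∧ dheight v (k + 1) = -1 :=
    ⟨v.length - 1, by omega, by rw [Nat.sub_add_cancel hpos, hend]⟩
  obtain ⟨hk, hk_eq⟩ := Nat.find_spec hex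
  set k := Nat.find hex
  have hpre : ∀ j ≤ k, 0 ≤ dheight v j := by
    rintro (_ | i) hi
    · exact le_rfl
    · have hne : dheight v (i + 1) ≠ -1 := fun h => Nat.find_min hex hi ⟨by omega, h⟩
      have := hge (i + 1) (by omega)
      omega
  have hstep := dheight_succ v hk
  rw [hk_eq] at hstep
  have hpeak : v[k] = false ∧ dheight v k = 0 := by
    have := hpre k le_rfl
    cases h : v[k] <;> simp only [h, Bool.false_eq_true, if_false, if_true, true_and] at hstep ⊢
    <;> omega
  refine ⟨k, hk, hpeak.1, IsDyck.of_forall (fun j hj => ?_) ?_⟩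
  · rw [dheight_take _ (by simp at hj; omega)]
    exact hpre j (by simp at hj; omega)
  · rw [List.length_take_of_le hk.le, dheight_take _ le_rfl, hpeak.2]

lemma IsDyck.exists_eq_elevate_append {w : List Bool} (hw : IsDyck w) (hne : w ≠ []) :
    ∃ w₁ w₂, IsDyck w₁ ∧ IsDyck w₂ ∧ w = elevate w₁ ++ w₂ := by
  obtain ⟨b, rest, rfl⟩ := List.exists_cons_of_ne_nil hne
  have hb : b = true := by
    have := hw.nonneg (k := 1) (by simp)
    rw [dheight_cons, dheight_zero] at this
    cases b <;> simp_all
  subst hb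
  have hge : ∀ k ≤ rest.length, -1 ≤ dheight rest k := fun k hk => by
    have := hw.nonneg (k := k + 1) (by simpa using hk)
    rw [dheight_cons, if_pos rfl] at this
    linarith
  have hend : dheight rest rest.length = -1 := by
    have := hw.2
    rw [List.length_cons, dheight_cons, if_pos rfl] at this
    linarith
  obtain ⟨k, hk, hdown, h₁⟩ := exists_isDyck_take_of_dheight_length_eq_neg_one hge hend
  have heq : true :: rest = elevate (rest.take k) ++ rest.drop (k + 1) := by
    conv_lhs => rw [← List.take_append_drop k rest, List.drop_eq_getElem_cons hk, hdown]
    simp [elevate]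
  refine ⟨_, _, h₁, ?_, heq⟩
  rw [heq] at hw
  exact hw.of_append_right (by rw [length_elevate, dheight_elevate_length, h₁.2])

@[elab_as_elim]
theorem IsDyck.induction_on {motive : List Bool → Prop} {w : List Bool} (hw : IsDyck w)
    (nil : motive [])
    (elevate_append : ∀ w₁ w₂, IsDyck w₁ → IsDyck w₂ → motive w₁ → motive w₂ →
      motive (elevate w₁ ++ w₂)) :
    motive w := by
  induction hn : w.length using Nat.strong_induction_on generalizing w with
  | _ n ih =>
    rcases eq_or_ne w [] with rfl | hne
    · exact nil
    obtain ⟨w₁, w₂, h₁, h₂, rfl⟩ := hw.exists_eq_elevate_append hne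
    simp only [List.length_append, length_elevate] at hn
    exact elevate_append w₁ w₂ h₁ h₂ (ih _ (by omega) h₁ rfl) (ih _ (by omega) h₂ rfl)

lemma IsDyck.even_length {w : List Bool} (hw : IsDyck w) : Even w.length := by
  refine hw.induction_on (by simp) fun w₁ w₂ _ _ ih₁ ih₂ => ?_
  simp only [List.length_append, length_elevate]
  exact (ih₁.add even_two).add ih₂

def heightSum (w : List Bool) : ℤ := ∑ k ∈ range w.length, dheight w (k + 1)

lemma darea_eq (w : List Bool) : darea w = (heightSum w - (w.length : ℤ) / 2) / 2 := rfl

lemma heightSum_append (a b : List Bool) :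
    heightSum (a ++ b) = heightSum a + b.length * dheight a a.length + heightSum b := by
  rw [heightSum, List.length_append, sum_range_add, add_assoc]
  congr 1
  · exact sum_congr rfl fun k hk => dheight_append_of_le _ _ (by simp at hk; omega)
  · simp only [add_assoc, dheight_append_add, sum_add_distrib, sum_const, card_range,
      nsmul_eq_mul, heightSum]

lemma heightSum_elevate (w : List Bool) :
    heightSum (elevate w) = heightSum w + w.length + 1 + dheight w w.length := by
  have hup : heightSum [true] = 1 := rfl
  have hdown : heightSum [false] = -1 := rfl
  rw [elevate, ← List.singleton_append, heightSum_append, heightSum_append, hup, hdown,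
    List.length_append, List.length_singleton, List.length_singleton,
    show dheight [true] 1 = 1 from rfl]
  push_cast
  ring

lemma heightSum_elevate_append {w₁ : List Bool} (h₁ : IsDyck w₁) (w₂ : List Bool) :
    heightSum (elevate w₁ ++ w₂) = heightSum w₁ + heightSum w₂ + w₁.length + 1 := by
  rw [heightSum_append, heightSum_elevate, length_elevate, dheight_elevate_length, h₁.2]
  ring

lemma IsDyck.heightSum_eq {w : List Bool} (hw : IsDyck w) :
    heightSum w = 2 * darea w + (w.length : ℤ) / 2 := by
  refine hw.induction_on (by simp [heightSum, darea]) fun w₁ w₂ h₁ h₂ ih₁ ih₂ => ?_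
  obtain ⟨a, ha⟩ := h₁.even_length
  obtain ⟨b, hb⟩ := h₂.even_length
  rw [darea_eq, heightSum_elevate_append h₁, List.length_append, length_elevate]
  omega

lemma darea_elevate_append {w₁ w₂ : List Bool} (h₁ : IsDyck w₁) (h₂ : IsDyck w₂) :
    darea (elevate w₁ ++ w₂) = darea w₁ + darea w₂ + (w₁.length / 2 : ℕ) := by
  obtain ⟨a, ha⟩ := h₁.even_length
  obtain ⟨b, hb⟩ := h₂.even_length
  have hs₁ := h₁.heightSum_eq
  have hs₂ := h₂.heightSum_eq
  rw [darea_eq, heightSum_elevate_append h₁, List.length_append, length_elevate]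
  omega

lemma IsDyck.darea_nonneg {w : List Bool} (hw : IsDyck w) : 0 ≤ darea w := by
  refine hw.induction_on (by simp [darea]) fun w₁ w₂ h₁ h₂ ih₁ ih₂ => ?_
  rw [darea_elevate_append h₁ h₂]
  omega

lemma dreturns_eq_sum (w : List Bool) :
    dreturns w = ∑ k ∈ range w.length, if dheight w (k + 1) = 0 then 1 else 0 := by
  rw [dreturns, card_filter, ← Finset.Ico_add_one_right_eq_Icc, Finset.sum_Ico_eq_sum_range]
  simp only [add_tsub_cancel_right, add_comm 1]

lemma dreturns_append {a : List Bool} (ha : dheight a a.length = 0) (b : List Bool) :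
    dreturns (a ++ b) = dreturns a + dreturns b := by
  rw [dreturns_eq_sum, List.length_append, sum_range_add, dreturns_eq_sum, dreturns_eq_sum]
  congr 1
  · exact sum_congr rfl fun k hk => by rw [dheight_append_of_le _ _ (by simp at hk; omega)]
  · simp only [add_assoc, dheight_append_add, ha, zero_add]

lemma dreturns_elevate {w : List Bool} (hw : IsDyck w) : dreturns (elevate w) = 1 := by
  rw [dreturns_eq_sum, length_elevate, sum_range_succ, dheight_elevate_length, hw.2,
    sum_eq_zero fun k hk => ?_]
  · rfl
  · rw [dheight_elevate_succ _ (by simp at hk; omega), if_neg]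
    linarith [hw.nonneg (k := k) (by simp at hk; omega)]

def dweight (q s : ℝ) (w : List Bool) : ℝ := q ^ (darea w).toNat * s ^ dreturns w

lemma dweight_elevate_append (q s : ℝ) {w₁ w₂ : List Bool} (h₁ : IsDyck w₁) (h₂ : IsDyck w₂) :
    dweight q s (elevate w₁ ++ w₂) =
      s * q ^ (w₁.length / 2) * dweight q 1 w₁ * dweight q s w₂ := by
  have harea : (darea (elevate w₁ ++ w₂)).toNat =
      (darea w₁).toNat + (darea w₂).toNat + w₁.length / 2 := by
    have := h₁.darea_nonneg
    have := h₂.darea_nonneg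
    rw [darea_elevate_append h₁ h₂]
    omega
  have hret : dreturns (elevate w₁ ++ w₂) = 1 + dreturns w₂ := by
    rw [dreturns_append (by rw [length_elevate, dheight_elevate_length, h₁.2]),
      dreturns_elevate h₁]
  simp only [dweight, harea, hret, one_pow, pow_add, pow_one]
  ring

open scoped Classical in
noncomputable def dyckPaths (n : ℕ) : Finset (List Bool) :=
  {w ∈ univ.image (List.ofFn (n := n)) | IsDyck w}

lemma mem_dyckPaths {n : ℕ} {w : List Bool} : w ∈ dyckPaths n ↔ w.length = n ∧ IsDyck w := by
  simp only [dyckPaths, mem_filter, mem_image, mem_univ, true_and]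
  constructor
  · rintro ⟨⟨f, rfl⟩, hw⟩
    exact ⟨List.length_ofFn, hw⟩
  · rintro ⟨rfl, hw⟩
    exact ⟨⟨fun i => w[(i : ℕ)], List.ofFn_getElem⟩, hw⟩

lemma Gqs_eq_sum_dyckPaths (N : ℕ) (q s : ℝ) :
    Gqs N q s = ∑ w ∈ dyckPaths (2 * N), dweight q s w := by
  classical
  rw [Gqs, dyckPaths, sum_filter, sum_image fun f _ g _ h => List.ofFn_injective h]
  rfl

lemma dyckPaths_zero : dyckPaths 0 = {[]} := by
  ext w
  rw [mem_dyckPaths, mem_singleton, List.length_eq_zero_iff]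
  exact ⟨And.left, fun h => ⟨h, h ▸ isDyck_nil⟩⟩

lemma sum_dyckPaths_succ {M : Type*} [AddCommMonoid M] (f : List Bool → M) (N : ℕ) :
    ∑ w ∈ dyckPaths (2 * (N + 1)), f w =
      ∑ p ∈ antidiagonal N, ∑ x ∈ dyckPaths (2 * p.2) ×ˢ dyckPaths (2 * p.1),
        f (elevate x.1 ++ x.2) := by
  rw [sum_sigma']
  symm
  refine sum_bij (fun x _ => elevate x.2.1 ++ x.2.2) ?_ ?_ ?_ fun _ _ => rfl
  · rintro ⟨p, w₁, w₂⟩ hx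
    dsimp only at hx ⊢
    simp only [mem_sigma, HasAntidiagonal.mem_antidiagonal, mem_product, mem_dyckPaths] at hx
    obtain ⟨hp, ⟨hl₁, h₁⟩, ⟨hl₂, h₂⟩⟩ := hx
    rw [mem_dyckPaths, List.length_append, length_elevate]
    exact ⟨by omega, (isDyck_elevate h₁).append h₂⟩
  · rintro ⟨p, w₁, w₂⟩ hx ⟨p', v₁, v₂⟩ hy h
    simp only [mem_sigma, HasAntidiagonal.mem_antidiagonal, mem_product, mem_dyckPaths] at hx hy
    obtain ⟨rfl, rfl⟩ := elevate_append_inj hx.2.1.2 hy.2.1.2 h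
    obtain rfl : p = p' := Prod.ext (by omega) (by omega)
    rfl
  · intro w hw
    rw [mem_dyckPaths] at hw
    obtain ⟨w₁, w₂, h₁, h₂, rfl⟩ :=
      hw.2.exists_eq_elevate_append (List.ne_nil_of_length_pos (by omega))
    obtain ⟨a, ha⟩ := h₁.even_length
    obtain ⟨b, hb⟩ := h₂.even_length
    simp only [List.length_append, length_elevate] at hw
    refine ⟨⟨(b, a), w₁, w₂⟩, ?_, rfl⟩
    simp only [mem_sigma, HasAntidiagonal.mem_antidiagonal, mem_product, mem_dyckPaths]
    exact ⟨by omega, ⟨by omega, h₁⟩, ⟨by omega, h₂⟩⟩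

lemma Gqs_zero (q s : ℝ) : Gqs 0 q s = 1 := by
  simp [Gqs_eq_sum_dyckPaths, dyckPaths_zero, dweight, darea, dreturns]

lemma Gqs_succ (N : ℕ) (q s : ℝ) :
    Gqs (N + 1) q s = s * ∑ p ∈ antidiagonal N, Gqs p.1 q s * (Gqs p.2 q 1 * q ^ p.2) := by
  rw [Gqs_eq_sum_dyckPaths, sum_dyckPaths_succ, mul_sum]
  refine sum_congr rfl fun p _ => ?_
  calc ∑ x ∈ dyckPaths (2 * p.2) ×ˢ dyckPaths (2 * p.1), dweight q s (elevate x.1 ++ x.2)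
      = ∑ w₁ ∈ dyckPaths (2 * p.2), ∑ w₂ ∈ dyckPaths (2 * p.1),
          s * q ^ p.2 * dweight q 1 w₁ * dweight q s w₂ := by
        rw [sum_product]
        refine sum_congr rfl fun w₁ hw₁ => sum_congr rfl fun w₂ hw₂ => ?_
        rw [mem_dyckPaths] at hw₁ hw₂
        rw [dweight_elevate_append q s hw₁.2 hw₂.2, hw₁.1, Nat.mul_div_cancel_left _ two_pos]
    _ = _ := by
        rw [Gqs_eq_sum_dyckPaths, Gqs_eq_sum_dyckPaths, ← sum_mul_sum, ← mul_sum]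
        ring

/-- The generating function `Ω(q,s,z) = ∑_N G_N(q,s) z^N` satisfies
`Ω(q,s,z) − 1 = s z Ω(q,s,z) Ω(q,1,qz)` as formal power series in `z`. -/
theorem Omega_functional_equation (q s : ℝ) :
    PowerSeries.mk (fun N => Gqs N q s) - 1 =
      PowerSeries.C s * PowerSeries.X *
        PowerSeries.mk (fun N => Gqs N q s) *
        PowerSeries.mk (fun N => Gqs N q 1 * q ^ N) := by
  ext (_ | N)
  · simp [Gqs_zero]
  · rw [mul_assoc, mul_comm (PowerSeries.C s), mul_assoc, PowerSeries.coeff_succ_X_mul,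
      PowerSeries.coeff_C_mul, PowerSeries.coeff_mul]
    simp [Gqs_succ]
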